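/- Let n ≥ 1 and let P_n ⊆ (ℚ/ℤ)^(n−1) × ℚ be the image under ψ of the submonoid {(a_0, …, a_{n−1}) ∈ ℚ^n : 0 ≤ a_i for all i}. Then the saturation {x ∈ (ℚ/ℤ)^(n−1) × ℚ : there exists an integer m ≥ 1 with m•x ∈ P_n} is equal to (ℚ/ℤ)^(n−1) × {q ∈ ℚ : 0 ≤ q}. -/

import Mathlib

/-! Since `ℚ/ℤ` is torsion, some `m ≥ 1` kills the `(ℚ/ℤ)`-part of any `x` with `0 ≤ x.2`, and then
`m • x = (0, m * x.2)` is the image of the vector carrying `m * x.2` in its last coordinate, which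
`ψ` sees only through the sum. Conversely, `ψ` sends nonnegative vectors to nonnegative sums. -/

/-- The subgroup `ℤ` of `ℚ`. -/
def ZinQ : AddSubgroup ℚ := AddSubgroup.zmultiples (1 : ℚ)

/-- The quotient group `ℚ/ℤ`. -/
abbrev QmodZ : Type := ℚ ⧸ ZinQ

/-- The quotient map `ℚ → ℚ/ℤ`, `a ↦ a mod ℤ`. -/
def qmodZmk : ℚ →+ QmodZ := QuotientAddGroup.mk' ZinQ

/-- The submonoid of `ℚ^n` of vectors with all coordinates nonnegative. -/
def nonnegVecs (n : ℕ) : AddSubmonoid (Fin n → ℚ) where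
  carrier := {a | ∀ i, 0 ≤ a i}
  zero_mem' := fun _ => le_refl 0
  add_mem' := fun ha hb i => add_nonneg (ha i) (hb i)

lemma den_nsmul_qmodZmk (r : ℚ) : r.den • qmodZmk r = 0 := by
  rw [← map_nsmul, qmodZmk, QuotientAddGroup.mk'_apply, QuotientAddGroup.eq_zero_iff, ZinQ,
    AddSubgroup.mem_zmultiples_iff]
  exact ⟨r.num, by rw [zsmul_one, nsmul_eq_mul, mul_comm, Rat.mul_den_eq_num]⟩

lemma isAddTorsion_qmodZ : IsAddTorsion QmodZ := fun x => by
  obtain ⟨r, rfl⟩ := QuotientAddGroup.mk'_surjective ZinQ x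
  exact isOfFinAddOrder_iff_nsmul_eq_zero.2 ⟨r.den, r.den_pos, den_nsmul_qmodZmk r⟩

lemma IsAddTorsion.exists_pos_nsmul_pi_eq_zero {ι G : Type*} [Finite ι] [AddMonoid G]
    (hG : IsAddTorsion G) (x : ι → G) : ∃ m : ℕ, 0 < m ∧ m • x = 0 :=
  isOfFinAddOrder_iff_nsmul_eq_zero.1 (IsOfFinAddOrder.pi fun i => hG (x i))

lemma snd_nonneg_of_mem_map_nonnegVecs {n : ℕ} {G : Type*} [AddCommMonoid G]
    {ψ : (Fin n → ℚ) →+ G × ℚ} (hψ : ∀ a, (ψ a).2 = ∑ i, a i) {x : G × ℚ}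
    (hx : x ∈ (nonnegVecs n).map ψ) : 0 ≤ x.2 := by
  obtain ⟨a, ha, rfl⟩ := hx
  rw [hψ]
  exact Finset.sum_nonneg fun i _ => ha i

lemma zero_prod_mem_map_nonnegVecs {n : ℕ} (hn : 1 ≤ n)
    {ψ : (Fin n → ℚ) →+ (Fin (n - 1) → QmodZ) × ℚ}
    (hψ : ∀ a : Fin n → ℚ,
      ψ a = (fun i : Fin (n - 1) => qmodZmk (a (Fin.castLE (Nat.sub_le n 1) i)), ∑ i, a i))
    {q : ℚ} (hq : 0 ≤ q) : ((0 : Fin (n - 1) → QmodZ), q) ∈ (nonnegVecs n).map ψ := by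
  let last : Fin n := ⟨n - 1, by omega⟩
  refine ⟨Pi.single last q, fun i => ?_, ?_⟩
  · rcases eq_or_ne i last with rfl | hi
    · simpa using hq
    · simp [hi]
  · have hne (i : Fin (n - 1)) : Fin.castLE (Nat.sub_le n 1) i ≠ last :=
      Fin.ne_of_lt (Fin.mk_lt_mk.2 i.isLt)
    simp [hψ, Pi.single_apply, hne, Pi.zero_def]

/-- For `n ≥ 1`, the saturation of `P_n = ℚ≥0 ⊕_ℕ ⋯ ⊕_ℕ ℚ≥0` (the image under `ψ` of the
nonnegative vectors) inside `(ℚ/ℤ)^(n-1) × ℚ` equals `(ℚ/ℤ)^(n-1) × ℚ≥0`. -/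
theorem stmt_10 (n : ℕ) (hn : 1 ≤ n)
    (ψ : (Fin n → ℚ) →+ (Fin (n - 1) → QmodZ) × ℚ)
    (hψ : ∀ a : Fin n → ℚ,
      ψ a = (fun i : Fin (n - 1) => qmodZmk (a (Fin.castLE (Nat.sub_le n 1) i)), ∑ i, a i)) :
    {x : (Fin (n - 1) → QmodZ) × ℚ | ∃ m : ℕ, 1 ≤ m ∧ m • x ∈ (nonnegVecs n).map ψ} =
      {x : (Fin (n - 1) → QmodZ) × ℚ | 0 ≤ x.2} := by
  ext ⟨y, q⟩
  constructor
  · rintro ⟨m, hm, hmem⟩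
    have hmq : 0 ≤ (m : ℚ) * q := by
      simpa [nsmul_eq_mul] using snd_nonneg_of_mem_map_nonnegVecs (fun a => by rw [hψ]) hmem
    exact nonneg_of_mul_nonneg_right hmq (by exact_mod_cast hm)
  · intro hq
    obtain ⟨m, hm, hmy⟩ := isAddTorsion_qmodZ.exists_pos_nsmul_pi_eq_zero y
    refine ⟨m, hm, ?_⟩
    rw [Prod.smul_mk, hmy]
    exact zero_prod_mem_map_nonnegVecs hn hψ (nsmul_nonneg hq m)
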